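/- The function f(x,S) = 2|∇^⊥ r|²/r² − 1/2 (defined for x ∈ ℝ³, |x| ≥ 1, and 2-planes S ⊂ ℝ³) extends to a Lipschitz function on the Grassmannian bundle over a neighborhood of ∞ in S³ (with the round metric via stereographic projection) by setting f(∞, S) = −1/2. In particular, |∇₀ f|²_{ds₀²} is bounded: |∇f(·,S₀)|²_{dx²} is asymptotic to 1/r⁶ as r → ∞, so |∇₀f|²_{ds₀²} ∼ (1+r²)²/r⁶ → 0. -/

import Mathlib

/-! Under the inversion `ι x = x / ‖x‖²`, which maps `{‖x‖ ≥ 1}` into the closed unit ball and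
sends `∞` to `0`, one has `f(x,S) + 1/2 = 2‖P_{S^⊥} (ι x)‖²`. On the unit ball
`(u, S) ↦ ‖P_{S^⊥} u‖²` is Lipschitz in `u` and in the projection `P_S`, since `t ↦ t²` is
2-Lipschitz on `[0,1]`. It remains to compare distances: `‖σ x - σ y‖ = 2‖x - y‖ /
√((1 + ‖x‖²)(1 + ‖y‖²))` dominates `‖ι x - ι y‖ = ‖x - y‖ / (‖x‖‖y‖)` when `‖x‖, ‖y‖ ≥ 1`, and
likewise `‖σ x - N‖ = 2 / √(1 + ‖x‖²)` dominates `‖ι x‖ = 1 / ‖x‖`. -/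

open scoped RealInnerProductSpace

/-- Component of `v` orthogonal to the plane `S`. -/
noncomputable def perpPart (S : Submodule ℝ (EuclideanSpace ℝ (Fin 3)))
    (v : EuclideanSpace ℝ (Fin 3)) : EuclideanSpace ℝ (Fin 3) :=
  v - (S.orthogonalProjectionOnto v : EuclideanSpace ℝ (Fin 3))

/-- Orthogonal projection onto `S` as an endomorphism of `ℝ³`. -/
noncomputable def projCLM (S : Submodule ℝ (EuclideanSpace ℝ (Fin 3))) :
    EuclideanSpace ℝ (Fin 3) →L[ℝ] EuclideanSpace ℝ (Fin 3) :=
  S.subtypeL.comp (S.orthogonalProjectionOnto)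

open EuclideanGeometry

local notation "E³" => EuclideanSpace ℝ (Fin 3)

lemma abs_norm_sq_sub_norm_sq_le {E : Type*} [SeminormedAddCommGroup E] {a b : E}
    (ha : ‖a‖ ≤ 1) (hb : ‖b‖ ≤ 1) : |‖a‖ ^ 2 - ‖b‖ ^ 2| ≤ 2 * ‖a - b‖ :=
  calc |‖a‖ ^ 2 - ‖b‖ ^ 2| = |‖a‖ - ‖b‖| * (‖a‖ + ‖b‖) := by
        rw [sq_sub_sq, abs_mul, abs_of_nonneg (by positivity), mul_comm]
    _ ≤ ‖a - b‖ * 2 := by gcongr; exacts [abs_norm_sub_norm_le a b, by linarith]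
    _ = 2 * ‖a - b‖ := mul_comm _ _

lemma perpPart_eq_sub_projCLM (S : Submodule ℝ E³) (v : E³) : perpPart S v = v - projCLM S v :=
  rfl

lemma norm_perpPart_le (S : Submodule ℝ E³) (v : E³) : ‖perpPart S v‖ ≤ ‖v‖ := by
  simpa [perpPart] using Sᗮ.norm_starProjection_apply_le v

lemma perpPart_sub_perpPart (S S' : Submodule ℝ E³) (u v : E³) :
    perpPart S u - perpPart S' v = perpPart S (u - v) + (projCLM S' - projCLM S) v := by
  simp only [perpPart_eq_sub_projCLM, map_sub, sub_apply]
  abel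

lemma norm_perpPart_sub_perpPart_le (S S' : Submodule ℝ E³) (u v : E³) :
    ‖perpPart S u - perpPart S' v‖ ≤ ‖u - v‖ + ‖projCLM S - projCLM S'‖ * ‖v‖ := by
  rw [perpPart_sub_perpPart, norm_sub_rev (projCLM S)]
  exact (norm_add_le _ _).trans
    (add_le_add (norm_perpPart_le _ _) (ContinuousLinearMap.le_opNorm _ _))

lemma abs_norm_perpPart_sq_sub_le (S S' : Submodule ℝ E³) {u v : E³} (hu : ‖u‖ ≤ 1)
    (hv : ‖v‖ ≤ 1) :
    |‖perpPart S u‖ ^ 2 - ‖perpPart S' v‖ ^ 2| ≤ 2 * (‖u - v‖ + ‖projCLM S - projCLM S'‖) :=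
  calc |‖perpPart S u‖ ^ 2 - ‖perpPart S' v‖ ^ 2| ≤ 2 * ‖perpPart S u - perpPart S' v‖ :=
        abs_norm_sq_sub_norm_sq_le ((norm_perpPart_le S u).trans hu)
          ((norm_perpPart_le S' v).trans hv)
    _ ≤ 2 * (‖u - v‖ + ‖projCLM S - projCLM S'‖ * ‖v‖) := by
        gcongr; exact norm_perpPart_sub_perpPart_le S S' u v
    _ ≤ 2 * (‖u - v‖ + ‖projCLM S - projCLM S'‖) := by
        gcongr; exact mul_le_of_le_one_right (norm_nonneg _) hv

lemma norm_perpPart_sq_le (S : Submodule ℝ E³) {u : E³} (hu : ‖u‖ ≤ 1) :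
    ‖perpPart S u‖ ^ 2 ≤ ‖u‖ :=
  (pow_le_of_le_one (norm_nonneg _) ((norm_perpPart_le S u).trans hu) two_ne_zero).trans
    (norm_perpPart_le S u)

lemma perpPart_smul (S : Submodule ℝ E³) (c : ℝ) (v : E³) :
    perpPart S (c • v) = c • perpPart S v := by
  simp only [perpPart_eq_sub_projCLM, map_smul, smul_sub]

lemma norm_inversion_zero_one (x : E³) : ‖inversion 0 1 x‖ = ‖x‖⁻¹ := by
  simpa using dist_inversion_center (0 : E³) x 1

lemma norm_perpPart_inv_norm_smul_sq_div (S : Submodule ℝ E³) (x : E³) :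
    ‖perpPart S (‖x‖⁻¹ • x)‖ ^ 2 / ‖x‖ ^ 2 = ‖perpPart S (inversion 0 1 x)‖ ^ 2 := by
  have hinv : inversion 0 1 x = (‖x‖⁻¹ ^ 2) • x := by simp [inversion]
  rw [hinv, perpPart_smul, perpPart_smul, norm_smul, norm_smul]
  simp only [norm_inv, norm_pow, norm_norm]
  ring

local notation "E⁴" => EuclideanSpace ℝ (Fin 4)

noncomputable def invStereo (x : E³) : E⁴ :=
  (WithLp.equiv 2 (Fin 4 → ℝ)).symm
    ![2 * x 0 / (1 + ‖x‖ ^ 2), 2 * x 1 / (1 + ‖x‖ ^ 2), 2 * x 2 / (1 + ‖x‖ ^ 2),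
      (‖x‖ ^ 2 - 1) / (‖x‖ ^ 2 + 1)]

noncomputable def northPole : E⁴ := (WithLp.equiv 2 (Fin 4 → ℝ)).symm ![0, 0, 0, 1]

lemma norm_sq_eq_three (x : E³) : ‖x‖ ^ 2 = x 0 ^ 2 + x 1 ^ 2 + x 2 ^ 2 := by
  simp [EuclideanSpace.real_norm_sq_eq, Fin.sum_univ_three]

lemma norm_invStereo_sq (x : E³) : ‖invStereo x‖ ^ 2 = 1 := by
  have hx := norm_sq_eq_three x
  have h₁ : (1 : ℝ) + ‖x‖ ^ 2 ≠ 0 := by positivity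
  have h₂ : ‖x‖ ^ 2 + (1 : ℝ) ≠ 0 := by positivity
  rw [EuclideanSpace.real_norm_sq_eq (invStereo x)]
  simp only [invStereo, WithLp.equiv_symm_apply, Fin.sum_univ_four, Matrix.cons_val_zero,
    Matrix.cons_val_one, Matrix.cons_val_two, Matrix.cons_val_three, Matrix.head_cons,
    Matrix.tail_cons]
  field_simp
  linear_combination (-4 : ℝ) * (1 + ‖x‖ ^ 2) ^ 2 * hx

lemma inner_invStereo_mul (x y : E³) :
    ⟪invStereo x, invStereo y⟫ * ((1 + ‖x‖ ^ 2) * (1 + ‖y‖ ^ 2)) =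
      4 * ⟪x, y⟫ + (‖x‖ ^ 2 - 1) * (‖y‖ ^ 2 - 1) := by
  have hxy : ⟪x, y⟫ = x 0 * y 0 + x 1 * y 1 + x 2 * y 2 := by
    simp [PiLp.inner_apply, Fin.sum_univ_three, mul_comm]
  have h₁ : (1 : ℝ) + ‖x‖ ^ 2 ≠ 0 := by positivity
  have h₂ : (1 : ℝ) + ‖y‖ ^ 2 ≠ 0 := by positivity
  have h₃ : ‖x‖ ^ 2 + (1 : ℝ) ≠ 0 := by positivity
  have h₄ : ‖y‖ ^ 2 + (1 : ℝ) ≠ 0 := by positivity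
  simp only [hxy, invStereo, PiLp.inner_apply, RCLike.inner_apply, WithLp.equiv_symm_apply,
    Fin.sum_univ_four, Matrix.cons_val_zero, Matrix.cons_val_one, Matrix.cons_val_two,
    Matrix.cons_val_three, Matrix.head_cons, Matrix.tail_cons, conj_trivial]
  field_simp
  ring

lemma norm_invStereo_sub_sq_mul (x y : E³) :
    ‖invStereo x - invStereo y‖ ^ 2 * ((1 + ‖x‖ ^ 2) * (1 + ‖y‖ ^ 2)) = 4 * ‖x - y‖ ^ 2 := by
  rw [norm_sub_sq_real, norm_sub_sq_real, norm_invStereo_sq, norm_invStereo_sq]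
  linear_combination (-2 : ℝ) * inner_invStereo_mul x y

lemma norm_invStereo_sub_northPole_sq_mul (x : E³) :
    ‖invStereo x - northPole‖ ^ 2 * (1 + ‖x‖ ^ 2) = 4 := by
  have hN : ‖northPole‖ ^ 2 = 1 := by
    simp [EuclideanSpace.real_norm_sq_eq, northPole, Fin.sum_univ_four]
  have hinner : ⟪invStereo x, northPole⟫ = (‖x‖ ^ 2 - 1) / (‖x‖ ^ 2 + 1) := by
    simp [invStereo, northPole, PiLp.inner_apply, Fin.sum_univ_four]
  have h : ‖x‖ ^ 2 + (1 : ℝ) ≠ 0 := by positivity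
  rw [norm_sub_sq_real, norm_invStereo_sq, hN, hinner]
  field_simp
  ring

lemma one_add_sq_mul_one_add_sq_le {a b : ℝ} (ha : 1 ≤ a) (hb : 1 ≤ b) :
    (1 + a ^ 2) * (1 + b ^ 2) ≤ 4 * (a * b) ^ 2 := by
  have ha' : 1 + a ^ 2 ≤ 2 * a ^ 2 := by nlinarith
  have hb' : 1 + b ^ 2 ≤ 2 * b ^ 2 := by nlinarith
  nlinarith [mul_le_mul ha' hb' (by positivity) (by positivity)]

lemma dist_inversion_le_norm_invStereo_sub {x y : E³} (hx : 1 ≤ ‖x‖) (hy : 1 ≤ ‖y‖) :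
    dist (inversion 0 1 x) (inversion 0 1 y) ≤ ‖invStereo x - invStereo y‖ := by
  have hx₀ : x ≠ 0 := norm_pos_iff.mp (by linarith)
  have hy₀ : y ≠ 0 := norm_pos_iff.mp (by linarith)
  rw [dist_inversion_inversion hx₀ hy₀, dist_zero_right, dist_zero_right, dist_eq_norm, one_pow,
    ← pow_le_pow_iff_left₀ (by positivity) (norm_nonneg _) two_ne_zero,
    ← mul_le_mul_iff_of_pos_right (by positivity : 0 < (1 + ‖x‖ ^ 2) * (1 + ‖y‖ ^ 2)),
    norm_invStereo_sub_sq_mul]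
  calc (1 / (‖x‖ * ‖y‖) * ‖x - y‖) ^ 2 * ((1 + ‖x‖ ^ 2) * (1 + ‖y‖ ^ 2))
      ≤ (1 / (‖x‖ * ‖y‖) * ‖x - y‖) ^ 2 * (4 * (‖x‖ * ‖y‖) ^ 2) :=
        mul_le_mul_of_nonneg_left (one_add_sq_mul_one_add_sq_le hx hy) (by positivity)
    _ = 4 * ‖x - y‖ ^ 2 := by field_simp

lemma norm_inversion_le_norm_invStereo_sub_northPole {x : E³} (hx : 1 ≤ ‖x‖) :
    ‖inversion 0 1 x‖ ≤ ‖invStereo x - northPole‖ := by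
  rw [norm_inversion_zero_one,
    ← pow_le_pow_iff_left₀ (by positivity) (norm_nonneg _) two_ne_zero,
    ← mul_le_mul_iff_of_pos_right (by positivity : (0 : ℝ) < 1 + ‖x‖ ^ 2),
    norm_invStereo_sub_northPole_sq_mul]
  calc ‖x‖⁻¹ ^ 2 * (1 + ‖x‖ ^ 2) ≤ ‖x‖⁻¹ ^ 2 * (2 * ‖x‖ ^ 2) := by gcongr; nlinarith
    _ = 2 := by field_simp
    _ ≤ 4 := by norm_num

/-- The function `f(x,S) = 2|∇^⊥ r|²/r² − 1/2`, defined for `|x| ≥ 1` and 2-planes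
`S ⊂ ℝ³`, extends to a Lipschitz function on the Grassmannian bundle over a neighborhood
of `∞` in `S³` (round metric, realized via the stereographic embedding `σ : ℝ³ → ℝ⁴`,
with north pole `N`) by setting `f(∞, S) = −1/2`: there is `C > 0` with
`|f(x,S) + 1/2| ≤ C‖σ(x) − N‖`, `|f(x,S) − f(y,S)| ≤ C‖σ(x) − σ(y)‖`, and
`|f(x,S) − f(x,S')| ≤ C‖P_S − P_{S'}‖` on `{|x| ≥ 1}`. -/
theorem stmt17
    (σ : EuclideanSpace ℝ (Fin 3) → EuclideanSpace ℝ (Fin 4))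
    (hσ : ∀ x, σ x = (WithLp.equiv 2 (Fin 4 → ℝ)).symm
      ![2 * x 0 / (1 + ‖x‖ ^ 2), 2 * x 1 / (1 + ‖x‖ ^ 2), 2 * x 2 / (1 + ‖x‖ ^ 2),
        (‖x‖ ^ 2 - 1) / (‖x‖ ^ 2 + 1)])
    (N : EuclideanSpace ℝ (Fin 4))
    (hN : N = (WithLp.equiv 2 (Fin 4 → ℝ)).symm ![0, 0, 0, 1])
    (f : EuclideanSpace ℝ (Fin 3) →
      {S : Submodule ℝ (EuclideanSpace ℝ (Fin 3)) // Module.finrank ℝ S = 2} → ℝ)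
    (hf : ∀ x S, f x S = 2 * ‖perpPart S.1 (‖x‖⁻¹ • x)‖ ^ 2 / ‖x‖ ^ 2 - 1 / 2) :
    ∃ C : ℝ, 0 < C ∧
      ∀ S S' : {S : Submodule ℝ (EuclideanSpace ℝ (Fin 3)) // Module.finrank ℝ S = 2},
        (∀ x, 1 ≤ ‖x‖ → |f x S - (-(1 : ℝ) / 2)| ≤ C * ‖σ x - N‖) ∧
        (∀ x y, 1 ≤ ‖x‖ → 1 ≤ ‖y‖ → |f x S - f y S| ≤ C * ‖σ x - σ y‖) ∧
        (∀ x, 1 ≤ ‖x‖ → |f x S - f x S'| ≤ C * ‖projCLM S.1 - projCLM S'.1‖) := by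
  obtain rfl : σ = invStereo := funext hσ
  subst hN
  have hf' : ∀ x S, f x S = 2 * ‖perpPart S.1 (inversion 0 1 x)‖ ^ 2 - 1 / 2 := fun x S => by
    rw [hf, mul_div_assoc, norm_perpPart_inv_norm_smul_sq_div]
  have hball : ∀ x : E³, 1 ≤ ‖x‖ → ‖inversion 0 1 x‖ ≤ 1 := fun x hx => by
    rw [norm_inversion_zero_one]; exact inv_le_one_of_one_le₀ hx
  have hlip : ∀ x y S S', 1 ≤ ‖x‖ → 1 ≤ ‖y‖ → |f x S - f y S'| ≤
      4 * (dist (inversion 0 1 x) (inversion 0 1 y) + ‖projCLM S.1 - projCLM S'.1‖) :=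
    fun x y S S' hx hy => by
      rw [hf', hf', dist_eq_norm, sub_sub_sub_cancel_right, ← mul_sub, abs_mul, abs_two,
        show (4 : ℝ) = 2 * 2 by norm_num, mul_assoc]
      gcongr
      exact abs_norm_perpPart_sq_sub_le S.1 S'.1 (hball x hx) (hball y hy)
  refine ⟨4, by norm_num, fun S S' => ⟨fun x hx => ?_, fun x y hx hy => ?_, fun x hx => ?_⟩⟩
  · calc |f x S - (-(1 : ℝ) / 2)| = 2 * ‖perpPart S.1 (inversion 0 1 x)‖ ^ 2 := by
          rw [hf', abs_of_nonneg (by ring_nf; positivity)]; ring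
      _ ≤ 2 * ‖inversion 0 1 x‖ := by
          gcongr; exact norm_perpPart_sq_le S.1 (hball x hx)
      _ ≤ 4 * ‖invStereo x - northPole‖ := by
          linarith [norm_inversion_le_norm_invStereo_sub_northPole hx,
            norm_nonneg (inversion 0 1 x)]
  · refine (hlip x y S S hx hy).trans ?_
    rw [sub_self, norm_zero, add_zero]
    gcongr
    exact dist_inversion_le_norm_invStereo_sub hx hy
  · simpa using hlip x x S S' hx hx
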